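/- arXiv:2404.01937 — 8 statements merged into one kernel-verified Lean document; each statement's English description precedes it below -/
import Mathlib

section
/- Let V be a vector space over a field of characteristic 0 with a bilinear multiplication xy satisfying the single identity 3(xy)z + (yx)z - (xz)y - (yz)x + (zx)y - 3x(yz) = 0 for all x,y,z. Define x∙y = xy+yx and [x,y] = xy-yx. Then (V,∙,[-,-]) is a Poisson algebra: ∙ is commutative and associative, [-,-] satisfies the Jacobi identity, and the Leibniz rule [x∙y,z] = x∙[y,z] + [x,z]∙y holds. -/
/-!
Each of the three nontrivial Poisson identities for `x ∙ y = xy + yx` and `[x, y] = xy - yx`,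
multiplied by `3`, is an integer combination of the defining identity `D(x, y, z) = 0` at the six
permutations of `(x, y, z)`. The factor `3` is unavoidable: `D(x, y, z)` is the only instance
containing the right-nested monomial `x(yz)`, and it does so with coefficient `-3`.
-/

namespace PoissonAdmissible

section CommRing

variable {K V : Type*} [CommRing K] [AddCommGroup V] [Module K V] (m : V →ₗ[K] V →ₗ[K] V)

def defect (x y z : V) : V :=
  (3:K) • m (m x y) z + m (m y x) z - m (m x z) y - m (m y z) x + m (m z x) y
    - (3:K) • m x (m y z)

def symProd (x y : V) : V := m x y + m y x

def bracket (x y : V) : V := m x y - m y x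

theorem three_smul_symProd_assoc (x y z : V) :
    (3:K) • (symProd m (symProd m x y) z - symProd m x (symProd m y z)) =
      defect m x y z + defect m x z y - defect m z x y - defect m z y x := by
  simp only [defect, symProd, map_add, LinearMap.add_apply]
  module

theorem three_smul_bracket_jacobi (x y z : V) :
    (3:K) • (bracket m (bracket m x y) z + bracket m (bracket m y z) x
        + bracket m (bracket m z x) y) =
      defect m x y z - defect m x z y - defect m y x z + defect m y z x + defect m z x y
        - defect m z y x := by
  simp only [defect, bracket, map_sub, LinearMap.sub_apply]
  module

theorem three_smul_bracket_symProd_leibniz (x y z : V) :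
    (3:K) • (bracket m (symProd m x y) z
        - (symProd m x (bracket m y z) + symProd m (bracket m x z) y)) =
      defect m x y z - defect m x z y + defect m y x z - defect m y z x + defect m z x y
        + defect m z y x := by
  simp only [defect, symProd, bracket, map_add, map_sub, LinearMap.add_apply,
    LinearMap.sub_apply]
  module

end CommRing

section Field

variable {K V : Type*} [Field K] [AddCommGroup V] [Module K V] {m : V →ₗ[K] V →ₗ[K] V}

theorem eq_zero_of_three_smul_eq_zero {v : V} (h3 : (3:K) ≠ 0) (h : (3:K) • v = 0) : v = 0 :=
  (smul_eq_zero.mp h).resolve_left h3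

theorem symProd_assoc (h3 : (3:K) ≠ 0) (hm : ∀ x y z, defect m x y z = 0) (x y z : V) :
    symProd m (symProd m x y) z = symProd m x (symProd m y z) :=
  sub_eq_zero.mp <| eq_zero_of_three_smul_eq_zero h3 <| by
    rw [three_smul_symProd_assoc]; simp only [hm]; abel

theorem bracket_jacobi (h3 : (3:K) ≠ 0) (hm : ∀ x y z, defect m x y z = 0) (x y z : V) :
    bracket m (bracket m x y) z + bracket m (bracket m y z) x + bracket m (bracket m z x) y
      = 0 :=
  eq_zero_of_three_smul_eq_zero h3 <| by
    rw [three_smul_bracket_jacobi]; simp only [hm]; abel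

theorem bracket_symProd_leibniz (h3 : (3:K) ≠ 0) (hm : ∀ x y z, defect m x y z = 0)
    (x y z : V) :
    bracket m (symProd m x y) z = symProd m x (bracket m y z) + symProd m (bracket m x z) y :=
  sub_eq_zero.mp <| eq_zero_of_three_smul_eq_zero h3 <| by
    rw [three_smul_bracket_symProd_leibniz]; simp only [hm]; abel

end Field

end PoissonAdmissible

/-- A bilinear multiplication satisfying `3(xy)z + (yx)z - (xz)y - (yz)x + (zx)y - 3x(yz) = 0`
polarizes to a Poisson algebra. -/
theorem stmt6 (K V : Type*) [Field K] [CharZero K] [AddCommGroup V] [Module K V]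
    (m : V →ₗ[K] V →ₗ[K] V)
    (h : ∀ x y z : V,
      (3:K) • m (m x y) z + m (m y x) z - m (m x z) y - m (m y z) x + m (m z x) y
      - (3:K) • m x (m y z) = 0) :
    ∀ x y z : V,
      -- ∙ is commutative
      (m x y + m y x = m y x + m x y) ∧
      -- ∙ is associative
      (m (m x y + m y x) z + m z (m x y + m y x)
        = m x (m y z + m z y) + m (m y z + m z y) x) ∧
      -- [-,-] is anticommutative
      (m x y - m y x = -(m y x - m x y)) ∧
      -- Jacobi identity for [-,-]
      ((m (m x y - m y x) z - m z (m x y - m y x))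
        + (m (m y z - m z y) x - m x (m y z - m z y))
        + (m (m z x - m x z) y - m y (m z x - m x z)) = 0) ∧
      -- Leibniz rule [x∙y,z] = x∙[y,z] + [x,z]∙y
      (m (m x y + m y x) z - m z (m x y + m y x)
        = (m x (m y z - m z y) + m (m y z - m z y) x)
          + (m (m x z - m z x) y + m y (m x z - m z x))) := by
  have h3 : (3:K) ≠ 0 := three_ne_zero
  intro x y z
  exact ⟨add_comm _ _, PoissonAdmissible.symProd_assoc h3 h x y z, (neg_sub _ _).symm,
    PoissonAdmissible.bracket_jacobi h3 h x y z,
    PoissonAdmissible.bracket_symProd_leibniz h3 h x y z⟩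
end

section
/- Let (V,∙,[-,-]) be a Poisson algebra. Then the depolarized multiplication xy = (1/2)(x∙y + [x,y]) satisfies the identity 3(xy)z + (yx)z - (xz)y - (yz)x + (zx)y - 3x(yz) = 0 for all x,y,z ∈ V. -/
/-!
Substituting `xy = ½(x∙y + [x,y])` into the left-hand side and expanding bilinearly splits it
into four parts according to which operation is outer and which inner. The part built from `∙`
alone vanishes by commutativity and associativity, the part built from `[-,-]` alone by
antisymmetry and the Jacobi identity, and the two mixed parts cancel each other by the Leibniz
rule.
-/

section Admissible

variable (K : Type*) {V : Type*} [Field K] [AddCommGroup V] [Module K V]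

def admissibleForm (f g : V → V → V) (x y z : V) : V :=
  (3:K) • f (g x y) z + f (g y x) z - f (g x z) y - f (g y z) x + f (g z x) y
    - (3:K) • f x (g y z)

variable {K}

lemma admissibleForm_self_eq_zero_of_comm_of_assoc (μ : V →ₗ[K] V →ₗ[K] V)
    (hcomm : ∀ x y : V, μ x y = μ y x)
    (hassoc : ∀ x y z : V, μ (μ x y) z = μ x (μ y z)) (x y z : V) :
    admissibleForm K (μ · ·) (μ · ·) x y z = 0 := by
  simp only [admissibleForm]
  rw [hcomm y x, hcomm z x, hcomm (μ y z) x, hassoc x y z]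
  module

lemma admissibleForm_self_eq_zero_of_anticomm_of_jacobi (β : V →ₗ[K] V →ₗ[K] V)
    (hanti : ∀ x y : V, β x y = -β y x)
    (hjac : ∀ x y z : V, β (β x y) z + β (β y z) x + β (β z x) y = 0) (x y z : V) :
    admissibleForm K (β · ·) (β · ·) x y z = 0 := by
  simp only [admissibleForm]
  rw [hanti y x, hanti x z, hanti x (β y z)]
  simp only [map_neg, LinearMap.neg_apply]
  linear_combination (norm := module) (2:K) • hjac x y z

lemma admissibleForm_add_admissibleForm_eq_zero_of_leibniz (μ β : V →ₗ[K] V →ₗ[K] V)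
    (hcomm : ∀ x y : V, μ x y = μ y x)
    (hanti : ∀ x y : V, β x y = -β y x)
    (hleib : ∀ x y z : V, β (μ x y) z = μ x (β y z) + μ (β x z) y) (x y z : V) :
    admissibleForm K (μ · ·) (β · ·) x y z + admissibleForm K (β · ·) (μ · ·) x y z = 0 := by
  simp only [admissibleForm]
  rw [hanti x (μ y z)]
  simp only [hleib, hcomm _ (β _ _)]
  rw [hanti y x, hanti z y, hanti x z]
  simp only [map_neg, LinearMap.neg_apply]
  module

lemma admissibleForm_depolarization (μ β : V →ₗ[K] V →ₗ[K] V) (m : V → V → V)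
    (hm : ∀ x y : V, m x y = ((1:K)/2) • (μ x y + β x y)) (x y z : V) :
    admissibleForm K m m x y z = ((1:K)/2) ^ 2 •
      (admissibleForm K (μ · ·) (μ · ·) x y z
        + (admissibleForm K (μ · ·) (β · ·) x y z + admissibleForm K (β · ·) (μ · ·) x y z)
        + admissibleForm K (β · ·) (β · ·) x y z) := by
  simp only [admissibleForm, hm, map_add, map_smul, LinearMap.add_apply, LinearMap.smul_apply]
  module

end Admissible

theorem stmt7_general (K V : Type*) [Field K] [AddCommGroup V] [Module K V]
    (bu br : V →ₗ[K] V →ₗ[K] V)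
    (hcomm : ∀ x y : V, bu x y = bu y x)
    (hassoc : ∀ x y z : V, bu (bu x y) z = bu x (bu y z))
    (hanti : ∀ x y : V, br x y = - br y x)
    (hjac : ∀ x y z : V, br (br x y) z + br (br y z) x + br (br z x) y = 0)
    (hleib : ∀ x y z : V, br (bu x y) z = bu x (br y z) + bu (br x z) y)
    (m : V → V → V)
    (hm : ∀ x y : V, m x y = ((1:K)/2) • (bu x y + br x y)) :
    ∀ x y z : V,
      (3:K) • m (m x y) z + m (m y x) z - m (m x z) y - m (m y z) x + m (m z x) y
      - (3:K) • m x (m y z) = 0 := by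
  intro x y z
  rw [← admissibleForm, admissibleForm_depolarization bu br m hm,
    admissibleForm_self_eq_zero_of_comm_of_assoc bu hcomm hassoc,
    admissibleForm_add_admissibleForm_eq_zero_of_leibniz bu br hcomm hanti hleib,
    admissibleForm_self_eq_zero_of_anticomm_of_jacobi br hanti hjac]
  simp

/-- The depolarization of a Poisson algebra satisfies
`3(xy)z + (yx)z - (xz)y - (yz)x + (zx)y - 3x(yz) = 0`. -/
theorem stmt7 (K V : Type*) [Field K] [CharZero K] [AddCommGroup V] [Module K V]
    (bu br : V →ₗ[K] V →ₗ[K] V)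
    (hcomm : ∀ x y : V, bu x y = bu y x)
    (hassoc : ∀ x y z : V, bu (bu x y) z = bu x (bu y z))
    (hanti : ∀ x y : V, br x y = - br y x)
    (hjac : ∀ x y z : V, br (br x y) z + br (br y z) x + br (br z x) y = 0)
    (hleib : ∀ x y z : V, br (bu x y) z = bu x (br y z) + bu (br x z) y)
    (m : V → V → V)
    (hm : ∀ x y : V, m x y = ((1:K)/2) • (bu x y + br x y)) :
    ∀ x y z : V,
      (3:K) • m (m x y) z + m (m y x) z - m (m x z) y - m (m y z) x + m (m z x) y
      - (3:K) • m x (m y z) = 0 :=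
  stmt7_general K V bu br hcomm hassoc hanti hjac hleib m hm
end

section
/- Every transposed Poisson algebra satisfies the identity x∙[y,z] + y∙[z,x] + z∙[x,y] = 0 for all x,y,z. -/
/-! Summing the transposed Leibniz rule `2 z∙[x,y] = [z∙x,y] + [x,z∙y]` over the cyclic
permutations of `x, y, z`, the six terms on the right cancel in pairs by commutativity of `∙`
and antisymmetry of `[-,-]`; hence twice the cyclic sum vanishes, and so does the sum itself
since `2` is invertible. -/

theorem two_smul_cyclic_sum_mul_bracket_eq_zero {R V : Type*} [CommRing R] [AddCommGroup V]
    [Module R V] (bu br : V →ₗ[R] V →ₗ[R] V)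
    (hcomm : ∀ x y : V, bu x y = bu y x)
    (hanti : ∀ x y : V, br x y = - br y x)
    (htp : ∀ x y z : V, (2:R) • bu z (br x y) = br (bu z x) y + br x (bu z y)) (x y z : V) :
    (2:R) • (bu x (br y z) + bu y (br z x) + bu z (br x y)) = 0 := by
  rw [smul_add, smul_add, htp y z x, htp z x y, htp x y z,
    hanti z (bu y x), hcomm y x, hanti y (bu x z), hcomm x z, hanti x (bu z y), hcomm z y]
  abel

theorem stmt8_general (K V : Type*) [Field K] [CharZero K] [AddCommGroup V] [Module K V]
    (bu br : V →ₗ[K] V →ₗ[K] V)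
    (hcomm : ∀ x y : V, bu x y = bu y x)
    (hanti : ∀ x y : V, br x y = - br y x)
    (htp : ∀ x y z : V, (2:K) • bu z (br x y) = br (bu z x) y + br x (bu z y)) :
    ∀ x y z : V, bu x (br y z) + bu y (br z x) + bu z (br x y) = 0 := fun x y z =>
  (smul_eq_zero.mp
    (two_smul_cyclic_sum_mul_bracket_eq_zero bu br hcomm hanti htp x y z)).resolve_left two_ne_zero

/-- Every transposed Poisson algebra satisfies `x∙[y,z] + y∙[z,x] + z∙[x,y] = 0`. -/
theorem stmt8 (K V : Type*) [Field K] [CharZero K] [AddCommGroup V] [Module K V]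
    (bu br : V →ₗ[K] V →ₗ[K] V)
    (hcomm : ∀ x y : V, bu x y = bu y x)
    (hassoc : ∀ x y z : V, bu (bu x y) z = bu x (bu y z))
    (hanti : ∀ x y : V, br x y = - br y x)
    (hjac : ∀ x y z : V, br (br x y) z + br (br y z) x + br (br z x) y = 0)
    (htp : ∀ x y z : V, (2:K) • bu z (br x y) = br (bu z x) y + br x (bu z y)) :
    ∀ x y z : V, bu x (br y z) + bu y (br z x) + bu z (br x y) = 0 :=
  stmt8_general K V bu br hcomm hanti htp
end

section
/- Let V be a vector space over a field of characteristic 0 with a bilinear multiplication satisfying the transposed-Leibniz depolarization identity 2(x₁x₂)x₃ - 2(x₂x₁)x₃ + (x₃x₂)x₁ - (x₁x₃)x₂ + (x₂x₃)x₁ - (x₃x₁)x₂ - x₁(x₂x₃) + x₂(x₁x₃) - 2x₃(x₂x₁) - x₁(x₃x₂) + x₂(x₃x₁) + 2x₃(x₁x₂) = 0, and additionally satisfying the Lie-admissibility identity (the alternating sum of associators over S₃ vanishes). Then (x₁x₂)x₃ - (x₂x₁)x₃ - (x₃x₂)x₁ - (x₁x₃)x₂ + (x₂x₃)x₁ + (x₃x₁)x₂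 = 0 and x₁(x₂x₃) - x₂(x₁x₃) - x₃(x₂x₁) - x₁(x₃x₂) + x₂(x₃x₁) + x₃(x₁x₂) = 0. -/
/-- If a bilinear multiplication satisfies the transposed-Leibniz depolarization identity
and is Lie admissible, then the two stated six-term identities hold separately. -/
theorem stmt12 (K V : Type*) [Field K] [CharZero K] [AddCommGroup V] [Module K V]
    (m : V →ₗ[K] V →ₗ[K] V)
    (htl : ∀ x y z : V,
      (2:K) • m (m x y) z - (2:K) • m (m y x) z + m (m z y) x - m (m x z) y
      + m (m y z) x - m (m z x) y
      - m x (m y z) + m y (m x z) - (2:K) • m z (m y x) - m x (m z y) + m y (m z x)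
      + (2:K) • m z (m x y) = 0)
    (hla : ∀ x y z : V,
      (m (m x y) z - m x (m y z)) - (m (m y x) z - m y (m x z))
      - (m (m z y) x - m z (m y x)) - (m (m x z) y - m x (m z y))
      + (m (m y z) x - m y (m z x)) + (m (m z x) y - m z (m x y)) = 0) :
    ∀ x y z : V,
      (m (m x y) z - m (m y x) z - m (m z y) x - m (m x z) y
        + m (m y z) x + m (m z x) y = 0) ∧
      (m x (m y z) - m y (m x z) - m z (m y x) - m x (m z y)
        + m y (m z x) + m z (m x y) = 0) := by
  intro x y z
  have h1 := htl x y z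
  have h2 := htl x z y
  have h3 := htl y z x
  have h4 := hla x y z
  have hL : m (m x y) z - m (m y x) z - m (m z y) x - m (m x z) y
      + m (m y z) x + m (m z x) y = 0 := by
    linear_combination (norm := module) (1/4 : K) • h1 - (1/4 : K) • h2
      + (1/4 : K) • h3 + (1/2 : K) • h4
  refine ⟨hL, ?_⟩
  linear_combination (norm := module) hL - h4
end

section
/- Let (P,∙,{,}) be a Poisson superalgebra over a field of characteristic 0 and let xy = x∙y + {x,y} be its depolarization. Then for all homogeneous x,y,z ∈ P: 3(xy)z - 3x(yz) + (-1)^{|x||y|}(yx)z - (-1)^{|y||z|}(xz)y - (-1)^{|x||y|+|x||z|}(yz)x + (-1)^{|x||z|+|y||z|}(zx)y = 0. -/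
/-!
The identity is bilinear in the pair (inner product, outer product) of the depolarization, so
for `xy = x∙y + {x,y}` it splits into four pieces. The `(∙, ∙)` piece vanishes by
supercommutativity and associativity, and the `({,}, {,})` piece is `-2 (-1)^{|x||z|}` times the
super Jacobi sum. The two mixed pieces are opposite multiples of one combination of `{x,y}∙z`,
`x∙{y,z}` and `{z,x}∙y`: the first by super-antisymmetry alone, the second by the Leibniz rule
in both arguments.
-/

/-- The super sign `(-1)^{ij}` for degrees `i, j : ZMod 2`. -/
def ssgn (i j : ZMod 2) : ℤ := (-1) ^ (i.val * j.val)

lemma ssgn_comm : ∀ i j : ZMod 2, ssgn i j = ssgn j i := by decide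

lemma ssgn_add_left : ∀ i j k : ZMod 2, ssgn (i + j) k = ssgn i k * ssgn j k := by decide

lemma ssgn_add_right : ∀ i j k : ZMod 2, ssgn i (j + k) = ssgn i j * ssgn i k := by decide

lemma ssgn_mul_self : ∀ i j : ZMod 2, ssgn i j * ssgn i j = 1 := by decide

lemma ssgn_cast_mul_self (R : Type*) [Ring R] (i j : ZMod 2) : (ssgn i j : R) * ssgn i j = 1 := by
  rw [← Int.cast_mul, ssgn_mul_self, Int.cast_one]

section

variable {K V : Type*} [CommRing K] [AddCommGroup V] [Module K V]

section

variable (G : ZMod 2 → Submodule K V)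

def IsGraded (b : V →ₗ[K] V →ₗ[K] V) : Prop :=
  ∀ i j : ZMod 2, ∀ x ∈ G i, ∀ y ∈ G j, b x y ∈ G (i + j)

def IsSuperComm (b : V →ₗ[K] V →ₗ[K] V) : Prop :=
  ∀ i j : ZMod 2, ∀ x ∈ G i, ∀ y ∈ G j, b y x = ssgn i j • b x y

def IsSuperAntisymm (b : V →ₗ[K] V →ₗ[K] V) : Prop :=
  ∀ i j : ZMod 2, ∀ x ∈ G i, ∀ y ∈ G j, b x y = -(ssgn i j • b y x)

def IsSuperJacobi (b : V →ₗ[K] V →ₗ[K] V) : Prop :=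
  ∀ i j k : ZMod 2, ∀ x ∈ G i, ∀ y ∈ G j, ∀ z ∈ G k,
    ssgn k i • b x (b y z) + ssgn i j • b y (b z x) + ssgn j k • b z (b x y) = 0

def IsSuperLeibniz (bu br : V →ₗ[K] V →ₗ[K] V) : Prop :=
  ∀ i j k : ZMod 2, ∀ x ∈ G i, ∀ y ∈ G j, ∀ z ∈ G k,
    br x (bu y z) = bu (br x y) z + ssgn i j • bu y (br x z)

variable {G} in
theorem IsSuperLeibniz.bracket_mul_left_eq {bu br : V →ₗ[K] V →ₗ[K] V}
    (hleib : IsSuperLeibniz G bu br) (hanti : IsSuperAntisymm G br) (hbuG : IsGraded G bu)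
    ⦃i j k : ZMod 2⦄ ⦃x y z : V⦄ (hx : x ∈ G i) (hy : y ∈ G j) (hz : z ∈ G k) :
    br (bu x y) z = bu x (br y z) + ssgn j k • bu (br x z) y := by
  rw [hanti _ _ _ (hbuG i j x hx y hy) z hz, hleib k i j z hz x hx y hy, hanti k i z hz x hx,
    hanti k j z hz y hy, ssgn_add_left, ssgn_comm k i, ssgn_comm k j]
  simp only [map_neg, map_zsmul, LinearMap.neg_apply, LinearMap.smul_apply]
  match_scalars <;> grind [ssgn_mul_self, ssgn_cast_mul_self]

end

def superPoissonExpr (μ ν : V →ₗ[K] V →ₗ[K] V) (i j k : ZMod 2) (x y z : V) : V :=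
  (3:K) • ν (μ x y) z - (3:K) • ν x (μ y z)
    + ssgn i j • ν (μ y x) z - ssgn j k • ν (μ x z) y
    - (ssgn i j * ssgn i k) • ν (μ y z) x
    + (ssgn i k * ssgn j k) • ν (μ z x) y

theorem superPoissonExpr_add_left (μ₁ μ₂ ν : V →ₗ[K] V →ₗ[K] V) (i j k : ZMod 2) (x y z : V) :
    superPoissonExpr (μ₁ + μ₂) ν i j k x y z =
      superPoissonExpr μ₁ ν i j k x y z + superPoissonExpr μ₂ ν i j k x y z := by
  simp only [superPoissonExpr, LinearMap.add_apply, map_add]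
  module

theorem superPoissonExpr_add_right (μ ν₁ ν₂ : V →ₗ[K] V →ₗ[K] V) (i j k : ZMod 2) (x y z : V) :
    superPoissonExpr μ (ν₁ + ν₂) i j k x y z =
      superPoissonExpr μ ν₁ i j k x y z + superPoissonExpr μ ν₂ i j k x y z := by
  simp only [superPoissonExpr, LinearMap.add_apply]
  module

variable {G : ZMod 2 → Submodule K V} {i j k : ZMod 2} {x y z : V}

theorem superPoissonExpr_self_eq_zero_of_assoc {b : V →ₗ[K] V →ₗ[K] V} (hbG : IsGraded G b)
    (hcomm : IsSuperComm G b) (hassoc : ∀ x y z, b (b x y) z = b x (b y z))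
    (hx : x ∈ G i) (hy : y ∈ G j) (hz : z ∈ G k) : superPoissonExpr b b i j k x y z = 0 := by
  have hyx : b (b y x) z = ssgn i j • b x (b y z) := by simp [hcomm i j x hx y hy, hassoc]
  have hxz : b (b x z) y = ssgn j k • b x (b y z) := by simp [hcomm j k y hy z hz, hassoc]
  have hyz : b (b y z) x = (ssgn i j * ssgn i k) • b x (b y z) := by
    rw [hcomm i (j + k) x hx _ (hbG j k y hy z hz), ssgn_add_right]
  have hzx : b (b z x) y = (ssgn i k * ssgn j k) • b x (b y z) := by
    simp [hcomm i k x hx z hz, hxz, smul_smul, mul_comm]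
  rw [superPoissonExpr, hyx, hxz, hyz, hzx, hassoc]
  match_scalars
  grind [ssgn_mul_self, ssgn_cast_mul_self]

theorem superPoissonExpr_self_eq_zero_of_jacobi {b : V →ₗ[K] V →ₗ[K] V} (hbG : IsGraded G b)
    (hanti : IsSuperAntisymm G b) (hjac : IsSuperJacobi G b)
    (hx : x ∈ G i) (hy : y ∈ G j) (hz : z ∈ G k) : superPoissonExpr b b i j k x y z = 0 := by
  have hxy : b (b x y) z = -((ssgn i k * ssgn j k) • b z (b x y)) := by
    rw [hanti _ k _ (hbG i j x hx y hy) z hz, ssgn_add_left]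
  have hyx : b (b y x) z = (ssgn i j * (ssgn i k * ssgn j k)) • b z (b x y) := by
    rw [hanti j i y hy x hx, ssgn_comm j i]
    simp [hxy, smul_smul]
  have hzx : b (b z x) y = -((ssgn i j * ssgn j k) • b y (b z x)) := by
    rw [hanti _ j _ (hbG k i z hz x hx) y hy, ssgn_add_left, ssgn_comm k j, ssgn_comm i j, mul_comm]
  have hxz : b (b x z) y = (ssgn i k * (ssgn i j * ssgn j k)) • b y (b z x) := by
    rw [hanti i k x hx z hz]
    simp [hzx, smul_smul]
  have hyz : b (b y z) x = -((ssgn i j * ssgn i k) • b x (b y z)) := by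
    rw [hanti _ i _ (hbG j k y hy z hz) x hx, ssgn_add_left, ssgn_comm j i, ssgn_comm k i]
  have hjac_xyz := hjac i j k x hx y hy z hz
  rw [ssgn_comm k i] at hjac_xyz
  rw [superPoissonExpr, hxy, hyx, hzx, hxz, hyz]
  linear_combination (norm := skip) (-2 * ssgn i k : ℤ) • hjac_xyz
  match_scalars <;> grind [ssgn_mul_self, ssgn_cast_mul_self]

theorem superPoissonExpr_bracket_mul {bu br : V →ₗ[K] V →ₗ[K] V} (hbrG : IsGraded G br)
    (hcomm : IsSuperComm G bu) (hanti : IsSuperAntisymm G br)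
    (hx : x ∈ G i) (hy : y ∈ G j) (hz : z ∈ G k) :
    superPoissonExpr br bu i j k x y z = (2:ℤ) • (bu (br x y) z - (2:ℤ) • bu x (br y z)
      + (ssgn i k * ssgn j k) • bu (br z x) y) := by
  have hyx : bu (br y x) z = -(ssgn i j • bu (br x y) z) := by
    simp [hanti j i y hy x hx, ssgn_comm j i]
  have hxz : bu (br x z) y = -(ssgn i k • bu (br z x) y) := by simp [hanti i k x hx z hz]
  have hyz : bu (br y z) x = (ssgn i j * ssgn i k) • bu x (br y z) := by
    rw [hcomm i (j + k) x hx _ (hbrG j k y hy z hz), ssgn_add_right]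
  rw [superPoissonExpr, hyx, hxz, hyz]
  match_scalars <;> grind [ssgn_mul_self, ssgn_cast_mul_self]

theorem superPoissonExpr_mul_bracket {bu br : V →ₗ[K] V →ₗ[K] V} (hbuG : IsGraded G bu)
    (hbrG : IsGraded G br) (hcomm : IsSuperComm G bu) (hanti : IsSuperAntisymm G br)
    (hleib : IsSuperLeibniz G bu br) (hx : x ∈ G i) (hy : y ∈ G j) (hz : z ∈ G k) :
    superPoissonExpr bu br i j k x y z = -((2:ℤ) • (bu (br x y) z - (2:ℤ) • bu x (br y z)
      + (ssgn i k * ssgn j k) • bu (br z x) y)) := by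
  have hyx : bu (br y x) z = -(ssgn i j • bu (br x y) z) := by
    simp [hanti j i y hy x hx, ssgn_comm j i]
  have hxz : bu (br x z) y = -(ssgn i k • bu (br z x) y) := by simp [hanti i k x hx z hz]
  have hzy : bu x (br z y) = -(ssgn j k • bu x (br y z)) := by
    simp [hanti k j z hz y hy, ssgn_comm k j]
  have hzy' : bu (br z y) x = -(ssgn j k • bu (br y z) x) := by
    simp [hanti k j z hz y hy, ssgn_comm k j]
  have hyz : bu (br y z) x = (ssgn i j * ssgn i k) • bu x (br y z) := by
    rw [hcomm i (j + k) x hx _ (hbrG j k y hy z hz), ssgn_add_right]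
  have hy_xz : bu y (br x z) = (ssgn i j * ssgn j k) • bu (br x z) y := by
    rw [hcomm _ j _ (hbrG i k x hx z hz) y hy, ssgn_add_left, ssgn_comm k j]
  have hy_zx : bu y (br z x) = (ssgn i j * ssgn j k) • bu (br z x) y := by
    rw [hcomm _ j _ (hbrG k i z hz x hx) y hy, ssgn_add_left, ssgn_comm k j, mul_comm]
  have hz_xy : bu z (br x y) = (ssgn i k * ssgn j k) • bu (br x y) z := by
    rw [hcomm _ k _ (hbrG i j x hx y hy) z hz, ssgn_add_left]
  have hleib_right := hleib.bracket_mul_left_eq hanti hbuG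
  rw [superPoissonExpr, hleib_right hx hy hz, hleib i j k x hx y hy z hz, hleib_right hy hx hz,
    hleib_right hx hz hy, hleib_right hy hz hx, hleib_right hz hx hy]
  simp only [hyx, hxz, hzy, hzy', hyz, hy_xz, hy_zx, hz_xy, ssgn_comm k j, ssgn_comm k i]
  match_scalars <;> grind [ssgn_mul_self, ssgn_cast_mul_self]

end

theorem stmt13_general (K V : Type*) [Field K] [AddCommGroup V] [Module K V]
    (G : ZMod 2 → Submodule K V)
    (bu br : V →ₗ[K] V →ₗ[K] V)
    (hbuG : ∀ (i j : ZMod 2), ∀ x ∈ G i, ∀ y ∈ G j, bu x y ∈ G (i + j))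
    (hbrG : ∀ (i j : ZMod 2), ∀ x ∈ G i, ∀ y ∈ G j, br x y ∈ G (i + j))
    (hcomm : ∀ (i j : ZMod 2), ∀ x ∈ G i, ∀ y ∈ G j, bu y x = ssgn i j • bu x y)
    (hassoc : ∀ x y z : V, bu (bu x y) z = bu x (bu y z))
    (hanti : ∀ (i j : ZMod 2), ∀ x ∈ G i, ∀ y ∈ G j, br x y = -(ssgn i j • br y x))
    (hjac : ∀ (i j k : ZMod 2), ∀ x ∈ G i, ∀ y ∈ G j, ∀ z ∈ G k,
      ssgn k i • br x (br y z) + ssgn i j • br y (br z x) + ssgn j k • br z (br x y) = 0)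
    (hleib : ∀ (i j k : ZMod 2), ∀ x ∈ G i, ∀ y ∈ G j, ∀ z ∈ G k,
      br x (bu y z) = bu (br x y) z + ssgn i j • bu y (br x z))
    (m : V → V → V) (hm : ∀ x y : V, m x y = bu x y + br x y) :
    ∀ (i j k : ZMod 2), ∀ x ∈ G i, ∀ y ∈ G j, ∀ z ∈ G k,
      (3:K) • m (m x y) z - (3:K) • m x (m y z)
      + ssgn i j • m (m y x) z - ssgn j k • m (m x z) y
      - (ssgn i j * ssgn i k) • m (m y z) x
      + (ssgn i k * ssgn j k) • m (m z x) y = 0 := by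
  intro i j k x hx y hy z hz
  obtain rfl : m = fun x y => (bu + br) x y := funext₂ fun x y => hm x y
  change superPoissonExpr (bu + br) (bu + br) i j k x y z = 0
  rw [superPoissonExpr_add_left, superPoissonExpr_add_right, superPoissonExpr_add_right,
    superPoissonExpr_self_eq_zero_of_assoc hbuG hcomm hassoc hx hy hz,
    superPoissonExpr_self_eq_zero_of_jacobi hbrG hanti hjac hx hy hz,
    superPoissonExpr_bracket_mul hbrG hcomm hanti hx hy hz,
    superPoissonExpr_mul_bracket hbuG hbrG hcomm hanti hleib hx hy hz]
  abel

/-- The depolarization `xy = x∙y + {x,y}` of a Poisson superalgebra satisfies the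
super Poisson identity. -/
theorem stmt13 (K V : Type*) [Field K] [CharZero K] [AddCommGroup V] [Module K V]
    (G : ZMod 2 → Submodule K V) (hG : DirectSum.IsInternal G)
    (bu br : V →ₗ[K] V →ₗ[K] V)
    (hbuG : ∀ (i j : ZMod 2), ∀ x ∈ G i, ∀ y ∈ G j, bu x y ∈ G (i + j))
    (hbrG : ∀ (i j : ZMod 2), ∀ x ∈ G i, ∀ y ∈ G j, br x y ∈ G (i + j))
    (hcomm : ∀ (i j : ZMod 2), ∀ x ∈ G i, ∀ y ∈ G j, bu y x = ssgn i j • bu x y)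
    (hassoc : ∀ x y z : V, bu (bu x y) z = bu x (bu y z))
    (hanti : ∀ (i j : ZMod 2), ∀ x ∈ G i, ∀ y ∈ G j, br x y = -(ssgn i j • br y x))
    (hjac : ∀ (i j k : ZMod 2), ∀ x ∈ G i, ∀ y ∈ G j, ∀ z ∈ G k,
      ssgn k i • br x (br y z) + ssgn i j • br y (br z x) + ssgn j k • br z (br x y) = 0)
    (hleib : ∀ (i j k : ZMod 2), ∀ x ∈ G i, ∀ y ∈ G j, ∀ z ∈ G k,
      br x (bu y z) = bu (br x y) z + ssgn i j • bu y (br x z))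
    (m : V → V → V) (hm : ∀ x y : V, m x y = bu x y + br x y) :
    ∀ (i j k : ZMod 2), ∀ x ∈ G i, ∀ y ∈ G j, ∀ z ∈ G k,
      (3:K) • m (m x y) z - (3:K) • m x (m y z)
      + ssgn i j • m (m y x) z - ssgn j k • m (m x z) y
      - (ssgn i j * ssgn i k) • m (m y z) x
      + (ssgn i k * ssgn j k) • m (m z x) y = 0 :=
  stmt13_general K V G bu br hbuG hbrG hcomm hassoc hanti hjac hleib m hm
end

section
/- Let (P,∙,{,}) be a Poisson superalgebra (with depolarization xy = x∙y + {x,y}) and let y ∈ P₁ be an odd homogeneous element. Then y·y = {y,y}, y·(y·y) = (y·y)·y, and (y·y)·(y·y) = y·((y·y)·y); in particular y² := y·y, y³ and y⁴ are well-defined independently of bracketing. -/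
/-!
Supercommutativity forces `y∙y = 0`, and super-Jacobi for the triple `(y, y, y)` reads
`-3 {y,{y,y}} = 0`. Hence `z := {y,y}` is an even element whose bracket with `y` vanishes both
ways and which commutes with `y` for `∙`, so the first two products collapse to `z` and `y∙z`.
For the last one, Leibniz gives `{y, y∙z} = {y,y}∙z - y∙{y,z} = z∙z`, while `y∙(y∙z) = (y∙y)∙z = 0`
and `{z,z} = 0`; both sides equal `z∙z`.
-/

@[simp]
lemma ssgn_zero_left (j : ZMod 2) : ssgn 0 j = 1 := by simp [ssgn]

@[simp]
lemma ssgn_zero_right (i : ZMod 2) : ssgn i 0 = 1 := by simp [ssgn]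

@[simp]
lemma ssgn_one_one : ssgn 1 1 = -1 := by decide

namespace PoissonSuperalgebra

variable {K V : Type*} [Field K] [AddCommGroup V] [Module K V]
  {G : ZMod 2 → Submodule K V} {bu br : V →ₗ[K] V →ₗ[K] V}

lemma bu_self_eq_zero_of_odd [CharZero K]
    (hcomm : ∀ (i j : ZMod 2), ∀ x ∈ G i, ∀ y ∈ G j, bu y x = ssgn i j • bu x y)
    {y : V} (hy : y ∈ G 1) : bu y y = 0 := by
  have := IsAddTorsionFree.of_isTorsionFree K V
  have h := hcomm 1 1 y hy y hy
  rw [ssgn_one_one, neg_one_smul, self_eq_neg] at h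
  exact h

lemma bu_comm_of_even
    (hcomm : ∀ (i j : ZMod 2), ∀ x ∈ G i, ∀ y ∈ G j, bu y x = ssgn i j • bu x y)
    {x w : V} {j : ZMod 2} (hx : x ∈ G 0) (hw : w ∈ G j) : bu x w = bu w x := by
  simpa using hcomm j 0 w hw x hx

lemma br_anticomm_of_even
    (hanti : ∀ (i j : ZMod 2), ∀ x ∈ G i, ∀ y ∈ G j, br x y = -(ssgn i j • br y x))
    {x w : V} {j : ZMod 2} (hx : x ∈ G 0) (hw : w ∈ G j) : br x w = -br w x := by
  simpa using hanti 0 j x hx w hw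

lemma br_self_eq_zero_of_even [CharZero K]
    (hanti : ∀ (i j : ZMod 2), ∀ x ∈ G i, ∀ y ∈ G j, br x y = -(ssgn i j • br y x))
    {x : V} (hx : x ∈ G 0) : br x x = 0 := by
  have := IsAddTorsionFree.of_isTorsionFree K V
  have h := br_anticomm_of_even hanti hx hx
  rwa [self_eq_neg] at h

lemma br_br_self_eq_zero_of_odd [CharZero K]
    (hjac : ∀ (i j k : ZMod 2), ∀ x ∈ G i, ∀ y ∈ G j, ∀ z ∈ G k,
      ssgn k i • br x (br y z) + ssgn i j • br y (br z x) + ssgn j k • br z (br x y) = 0)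
    {y : V} (hy : y ∈ G 1) : br y (br y y) = 0 := by
  have h := hjac 1 1 1 y hy y hy y hy
  have h3 : (3 : K) • br y (br y y) = 0 := by
    simp only [ssgn_one_one, neg_one_smul] at h
    linear_combination (norm := module) -h
  exact (smul_eq_zero.mp h3).resolve_left three_ne_zero

end PoissonSuperalgebra

open PoissonSuperalgebra in
theorem stmt15_general (K V : Type*) [Field K] [CharZero K] [AddCommGroup V] [Module K V]
    (G : ZMod 2 → Submodule K V)
    (bu br : V →ₗ[K] V →ₗ[K] V)
    (hbrG : ∀ (i j : ZMod 2), ∀ x ∈ G i, ∀ y ∈ G j, br x y ∈ G (i + j))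
    (hcomm : ∀ (i j : ZMod 2), ∀ x ∈ G i, ∀ y ∈ G j, bu y x = ssgn i j • bu x y)
    (hassoc : ∀ x y z : V, bu (bu x y) z = bu x (bu y z))
    (hanti : ∀ (i j : ZMod 2), ∀ x ∈ G i, ∀ y ∈ G j, br x y = -(ssgn i j • br y x))
    (hjac : ∀ (i j k : ZMod 2), ∀ x ∈ G i, ∀ y ∈ G j, ∀ z ∈ G k,
      ssgn k i • br x (br y z) + ssgn i j • br y (br z x) + ssgn j k • br z (br x y) = 0)
    (hleib : ∀ (i j k : ZMod 2), ∀ x ∈ G i, ∀ y ∈ G j, ∀ z ∈ G k,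
      br x (bu y z) = bu (br x y) z + ssgn i j • bu y (br x z))
    (m : V → V → V) (hm : ∀ x y : V, m x y = bu x y + br x y)
    (y : V) (hy : y ∈ G 1) :
    m y y = br y y ∧
    m y (m y y) = m (m y y) y ∧
    m (m y y) (m y y) = m y (m (m y y) y) := by
  set z := br y y
  have hz : z ∈ G 0 := hbrG 1 1 y hy y hy
  have hyy : bu y y = 0 := bu_self_eq_zero_of_odd hcomm hy
  have hyz : br y z = 0 := br_br_self_eq_zero_of_odd hjac hy
  have hzy : br z y = 0 := by rw [br_anticomm_of_even hanti hz hy, hyz, neg_zero]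
  have hzz : br z z = 0 := br_self_eq_zero_of_even hanti hz
  have hbu_zy : bu z y = bu y z := bu_comm_of_even hcomm hz hy
  have hyyz : bu y (bu y z) = 0 := by rw [← hassoc, hyy, map_zero, LinearMap.zero_apply]
  have hleib_yz : br y (bu y z) = bu z z := by simpa [hyz] using hleib 1 1 0 y hy y hy z hz
  have hmyy : m y y = z := by rw [hm, hyy, zero_add]
  refine ⟨hmyy, ?_, ?_⟩ <;> rw [hmyy]
  · simp only [hm, hyz, hzy, hbu_zy, add_zero]
  · simp only [hm, hzy, hzz, hbu_zy, hyyz, hleib_yz, zero_add, add_zero]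

/-- In a Poisson superalgebra with depolarization `xy = x∙y + {x,y}`, for any odd
element `y` one has `y·y = {y,y}`, `y·(y·y) = (y·y)·y` and
`(y·y)·(y·y) = y·((y·y)·y)`, so `y²`, `y³`, `y⁴` are well defined. -/
theorem stmt15 (K V : Type*) [Field K] [CharZero K] [AddCommGroup V] [Module K V]
    (G : ZMod 2 → Submodule K V) (hG : DirectSum.IsInternal G)
    (bu br : V →ₗ[K] V →ₗ[K] V)
    (hbuG : ∀ (i j : ZMod 2), ∀ x ∈ G i, ∀ y ∈ G j, bu x y ∈ G (i + j))
    (hbrG : ∀ (i j : ZMod 2), ∀ x ∈ G i, ∀ y ∈ G j, br x y ∈ G (i + j))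
    (hcomm : ∀ (i j : ZMod 2), ∀ x ∈ G i, ∀ y ∈ G j, bu y x = ssgn i j • bu x y)
    (hassoc : ∀ x y z : V, bu (bu x y) z = bu x (bu y z))
    (hanti : ∀ (i j : ZMod 2), ∀ x ∈ G i, ∀ y ∈ G j, br x y = -(ssgn i j • br y x))
    (hjac : ∀ (i j k : ZMod 2), ∀ x ∈ G i, ∀ y ∈ G j, ∀ z ∈ G k,
      ssgn k i • br x (br y z) + ssgn i j • br y (br z x) + ssgn j k • br z (br x y) = 0)
    (hleib : ∀ (i j k : ZMod 2), ∀ x ∈ G i, ∀ y ∈ G j, ∀ z ∈ G k,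
      br x (bu y z) = bu (br x y) z + ssgn i j • bu y (br x z))
    (m : V → V → V) (hm : ∀ x y : V, m x y = bu x y + br x y)
    (y : V) (hy : y ∈ G 1) :
    m y y = br y y ∧
    m y (m y y) = m (m y y) y ∧
    m (m y y) (m y y) = m y (m (m y y) y) :=
  stmt15_general K V G bu br hbrG hcomm hassoc hanti hjac hleib m hm y hy
end

section
/- Let (V,[-,-]) be an anticommutative algebra and f ∈ End(V) with [f(x),y] + [x,f(y)] = 0 for all x,y. Then the multiplication x∙y := [x,f(y)] is commutative, and for all x,y,z the following hold: A∙(x,y,z) + A∙(y,z,x) + A∙(z,x,y) = 0 and A∙(x,y,z) + A∙(z,y,x) = 0, where A∙(x,y,z) = (x∙y)∙z - x∙(y∙z). -/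
/-!
Since `f` is skew for the anticommutative bracket, `[x, f y] = -[f x, y] = [y, f x]`, so `x∙y` is
commutative. For any commutative product, rewriting `x(yz)` as `(yz)x` turns each associator into
a difference `(xy)z - (yz)x`, and both identities become telescoping sums.
-/

section CommutativeProduct

variable {V : Type*} [AddCommGroup V]

-- Mathlib's `associator` needs a ring structure; here the product is an arbitrary binary map.
def associatorOf (mul : V → V → V) (x y z : V) : V :=
  mul (mul x y) z - mul x (mul y z)

variable {mul : V → V → V}

theorem associatorOf_eq_sub_of_comm (hcomm : ∀ x y, mul x y = mul y x) (x y z : V) :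
    associatorOf mul x y z = mul (mul x y) z - mul (mul y z) x := by
  rw [associatorOf, hcomm x (mul y z)]

theorem associatorOf_cyclic_sum_eq_zero (hcomm : ∀ x y, mul x y = mul y x) (x y z : V) :
    associatorOf mul x y z + associatorOf mul y z x + associatorOf mul z x y = 0 := by
  simp only [associatorOf_eq_sub_of_comm hcomm]
  abel

theorem associatorOf_add_associatorOf_swap_eq_zero (hcomm : ∀ x y, mul x y = mul y x) (x y z : V) :
    associatorOf mul x y z + associatorOf mul z y x = 0 := by
  simp only [associatorOf_eq_sub_of_comm hcomm, hcomm z y, hcomm y x]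
  abel

end CommutativeProduct

theorem bracket_apply_comm_of_skew {V : Type*} [AddCommGroup V] {br : V → V → V} {f : V → V}
    (hanti : ∀ x y, br x y = -br y x) (hf : ∀ x y, br (f x) y + br x (f y) = 0) (x y : V) :
    br x (f y) = br y (f x) := by
  rw [eq_neg_of_add_eq_zero_right (hf x y), hanti y (f x)]

theorem stmt17_general (K V : Type*) [Field K] [AddCommGroup V] [Module K V]
    (br : V →ₗ[K] V →ₗ[K] V)
    (hanti : ∀ x y : V, br x y = - br y x)
    (f : V →ₗ[K] V)
    (hf : ∀ x y : V, br (f x) y + br x (f y) = 0)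
    (bu : V → V → V)
    (hbu : ∀ x y : V, bu x y = br x (f y)) :
    ∀ x y z : V,
      (bu x y = bu y x) ∧
      ((bu (bu x y) z - bu x (bu y z)) + (bu (bu y z) x - bu y (bu z x))
        + (bu (bu z x) y - bu z (bu x y)) = 0) ∧
      ((bu (bu x y) z - bu x (bu y z)) + (bu (bu z y) x - bu z (bu y x)) = 0) := by
  have hcomm : ∀ x y, bu x y = bu y x := fun x y => by
    rw [hbu, hbu]
    exact bracket_apply_comm_of_skew (br := fun a b => br a b) hanti hf x y
  exact fun x y z => ⟨hcomm x y, associatorOf_cyclic_sum_eq_zero hcomm x y z,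
    associatorOf_add_associatorOf_swap_eq_zero hcomm x y z⟩

/-- For an anticommutative product `[-,-]` and `f` with `[f(x),y] + [x,f(y)] = 0`,
the product `x∙y := [x,f(y)]` is commutative and its associator satisfies
`A(x,y,z) + A(y,z,x) + A(z,x,y) = 0` and `A(x,y,z) + A(z,y,x) = 0`. -/
theorem stmt17 (K V : Type*) [Field K] [CharZero K] [AddCommGroup V] [Module K V]
    (br : V →ₗ[K] V →ₗ[K] V)
    (hanti : ∀ x y : V, br x y = - br y x)
    (f : V →ₗ[K] V)
    (hf : ∀ x y : V, br (f x) y + br x (f y) = 0)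
    (bu : V → V → V)
    (hbu : ∀ x y : V, bu x y = br x (f y)) :
    ∀ x y z : V,
      (bu x y = bu y x) ∧
      ((bu (bu x y) z - bu x (bu y z)) + (bu (bu y z) x - bu y (bu z x))
        + (bu (bu z x) y - bu z (bu x y)) = 0) ∧
      ((bu (bu x y) z - bu x (bu y z)) + (bu (bu z y) x - bu z (bu y x)) = 0) :=
  stmt17_general K V br hanti f hf bu hbu
end

section
/- Let V be a vector space over a field of characteristic 0 with an anticommutative multiplication [-,-] and a commutative multiplication ∙ satisfying the distributive law [x₁,x₂]∙x₃ + [x₂,x₃]∙x₁ + [x₃,x₁]∙x₂ = 0. Then the depolarization xy = (1/2)(x∙y + [x,y]) satisfies AA(x₁,x₂,x₃) - AA(x₂,x₁,x₃) - AA(x₃,x₂,x₁) - AA(x₁,x₃,x₂) + AA(x₂,x₃,x₁) + AA(x₃,x₁,x₂) = 0, where AA(x,y,z) = (xy)z + x(yz). -/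
/-!
Expanding `xy = c(x∙y + [x,y])` writes each antiassociator as `c²` times a sum of eight
double products. In the alternating sum over the six orderings of `x, y, z`, the terms whose
inner product is symmetric in the permuted pair cancel, the terms `[[a,b],c]` cancel against
`[a,[b,c]]` because cyclic permutations are even, and the mixed terms `[a,b]∙c` add up to
`4c²` times the cyclic sum killed by the distributive law.
-/

section Depolarization

variable {R M : Type*} [CommRing R] [AddCommGroup M] [Module R M]
  {bu br : M →ₗ[R] M →ₗ[R] M} {m : M → M → M} {c : R}

def antiassociator (m : M → M → M) (x y z : M) : M := m (m x y) z + m x (m y z)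

theorem antiassociator_eq_of_depolarization (hcomm : ∀ x y, bu x y = bu y x)
    (hanti : ∀ x y, br x y = -br y x) (hm : ∀ x y, m x y = c • (bu x y + br x y)) (x y z : M) :
    antiassociator m x y z = c ^ 2 • (bu (bu x y) z + bu (br x y) z + br (bu x y) z
      + br (br x y) z + bu (bu y z) x + bu (br y z) x - br (bu y z) x - br (br y z) x) := by
  simp only [antiassociator, hm, map_add, map_smul, LinearMap.add_apply, LinearMap.smul_apply]
  rw [hcomm x (bu y z), hcomm x (br y z), hanti x (bu y z), hanti x (br y z)]
  module

theorem alternating_antiassociator_eq_of_depolarization (hcomm : ∀ x y, bu x y = bu y x)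
    (hanti : ∀ x y, br x y = -br y x) (hm : ∀ x y, m x y = c • (bu x y + br x y)) (x y z : M) :
    antiassociator m x y z - antiassociator m y x z - antiassociator m z y x
      - antiassociator m x z y + antiassociator m y z x + antiassociator m z x y
      = (4 * c ^ 2) • (bu (br x y) z + bu (br y z) x + bu (br z x) y) := by
  simp only [antiassociator_eq_of_depolarization hcomm hanti hm]
  rw [hcomm y x, hcomm z y, hcomm x z, hanti y x, hanti z y, hanti x z]
  simp only [map_neg, LinearMap.neg_apply]
  module

end Depolarization

theorem stmt18_general (K V : Type*) [Field K] [AddCommGroup V] [Module K V]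
    (bu br : V →ₗ[K] V →ₗ[K] V)
    (hcomm : ∀ x y : V, bu x y = bu y x)
    (hanti : ∀ x y : V, br x y = - br y x)
    (hdis : ∀ x y z : V, bu (br x y) z + bu (br y z) x + bu (br z x) y = 0)
    (m : V → V → V)
    (hm : ∀ x y : V, m x y = ((1:K)/2) • (bu x y + br x y)) :
    ∀ x y z : V,
      (m (m x y) z + m x (m y z)) - (m (m y x) z + m y (m x z))
      - (m (m z y) x + m z (m y x)) - (m (m x z) y + m x (m z y))
      + (m (m y z) x + m y (m z x)) + (m (m z x) y + m z (m x y)) = 0 := by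
  intro x y z
  have h := alternating_antiassociator_eq_of_depolarization hcomm hanti hm x y z
  rwa [hdis, smul_zero] at h

/-- If a commutative product `∙` and an anticommutative product `[-,-]` satisfy
`[x₁,x₂]∙x₃ + [x₂,x₃]∙x₁ + [x₃,x₁]∙x₂ = 0`, then the depolarization
`xy = (1/2)(x∙y + [x,y])` satisfies the stated antiassociator identity. -/
theorem stmt18 (K V : Type*) [Field K] [CharZero K] [AddCommGroup V] [Module K V]
    (bu br : V →ₗ[K] V →ₗ[K] V)
    (hcomm : ∀ x y : V, bu x y = bu y x)
    (hanti : ∀ x y : V, br x y = - br y x)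
    (hdis : ∀ x y z : V, bu (br x y) z + bu (br y z) x + bu (br z x) y = 0)
    (m : V → V → V)
    (hm : ∀ x y : V, m x y = ((1:K)/2) • (bu x y + br x y)) :
    ∀ x y z : V,
      (m (m x y) z + m x (m y z)) - (m (m y x) z + m y (m x z))
      - (m (m z y) x + m z (m y x)) - (m (m x z) y + m x (m z y))
      + (m (m y z) x + m y (m z x)) + (m (m z x) y + m z (m x y)) = 0 :=
  stmt18_general K V bu br hcomm hanti hdis m hm
end
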